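/- Let Π be an orthogonal projector (Π Hermitian with Π² = Π) and ρ a sub-normalized state with tr(Πρ) < 1. Define ρ̃ := (1−Π)ρ(1−Π)/(1 − tr(Πρ)). Then ρ̃ is positive semidefinite with tr ρ̃ ≤ 1, and the purified distance satisfies P(ρ, ρ̃) = √(tr(Πρ)). Moreover tr ρ̃ = 1 if and only if tr ρ = 1. -/

import Mathlib

open scoped Classical ComplexOrder Kronecker
open Matrix

noncomputable section

variable {n : Type*} [Fintype n] [DecidableEq n]

/-- Real part of the trace. -/
def rtr (A : Matrix n n ℂ) : ℝ := (A.trace).re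

/-- Löwner order: `loewnerLE A B` iff `B - A` is positive semidefinite. -/
def loewnerLE (A B : Matrix n n ℂ) : Prop := (B - A).PosSemidef

/-- The old Mathlib `Matrix.PosSemidef.sqrt` (removed), spelled out with its old definition. -/
def psdSqrtOld {A : Matrix n n ℂ} (hA : A.PosSemidef) : Matrix n n ℂ :=
  (hA.1.eigenvectorUnitary : Matrix n n ℂ) *
    Matrix.diagonal ((↑) ∘ (fun x : ℝ => Real.sqrt x) ∘ hA.1.eigenvalues) *
    (star hA.1.eigenvectorUnitary : Matrix n n ℂ)

/-- Positive semidefinite square root of a PSD matrix (junk value `0` otherwise). -/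
def msqrt (A : Matrix n n ℂ) : Matrix n n ℂ :=
  if h : A.PosSemidef then psdSqrtOld h else 0

/-- Trace norm `‖A‖₁ = tr √(Aᴴ A)`. -/
def traceNorm (A : Matrix n n ℂ) : ℝ :=
  rtr (psdSqrtOld (Matrix.posSemidef_conjTranspose_mul_self A))

/-- Generalized fidelity for sub-normalized states. -/
def genFid (ρ σ : Matrix n n ℂ) : ℝ :=
  (traceNorm (msqrt ρ * msqrt σ) + Real.sqrt ((1 - rtr ρ) * (1 - rtr σ))) ^ 2

/-- Purified distance. -/
def purDist (ρ σ : Matrix n n ℂ) : ℝ := Real.sqrt (1 - genFid ρ σ)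

/-- Trace distance. -/
def traceDist (ρ σ : Matrix n n ℂ) : ℝ := traceNorm (ρ - σ) / 2

/-- Max-divergence `D_max(ρ‖σ) = inf {λ : ρ ≤ 2^λ σ}` (Löwner order). -/
def Dmax (ρ σ : Matrix n n ℂ) : ℝ :=
  sInf {lam : ℝ | loewnerLE ρ (((2 : ℝ) ^ lam) • σ)}

/-- Smoothed max-divergence with purified-distance smoothing over sub-normalized states. -/
def DmaxSmoothP (ε : ℝ) (ρ σ : Matrix n n ℂ) : ℝ :=
  sInf {d : ℝ | ∃ ρ' : Matrix n n ℂ,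
    ρ'.PosSemidef ∧ rtr ρ' ≤ 1 ∧ purDist ρ ρ' ≤ ε ∧ d = Dmax ρ' σ}

/-- Hypothesis testing divergence
`D_h^ε(ρ‖σ) = -log sup {tr (Λ σ) : 0 ≤ Λ ≤ 1, tr (Λ ρ) ≥ 1 - ε}`. -/
def Dh (ε : ℝ) (ρ σ : Matrix n n ℂ) : ℝ :=
  - Real.logb 2 (sSup {x : ℝ | ∃ L : Matrix n n ℂ,
      L.PosSemidef ∧ loewnerLE L 1 ∧ 1 - ε ≤ rtr (L * ρ) ∧ x = rtr (L * σ)})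

/-- Real power of a Hermitian matrix, defined spectrally (junk value `0` if not Hermitian). -/
def hpow (A : Matrix n n ℂ) (t : ℝ) : Matrix n n ℂ :=
  if h : A.IsHermitian then
    (h.eigenvectorUnitary : Matrix n n ℂ) *
      Matrix.diagonal (fun i => ((h.eigenvalues i ^ t : ℝ) : ℂ)) *
      (star (h.eigenvectorUnitary : Matrix n n ℂ))
  else 0

/-- Sandwiched Rényi divergence of order `α`. -/
def sandwichedRenyi (α : ℝ) (ρ σ : Matrix n n ℂ) : ℝ :=
  (1 / (α - 1)) * Real.logb 2
    (rtr (hpow (hpow σ ((1 - α) / (2 * α)) * ρ * hpow σ ((1 - α) / (2 * α))) α) / rtr ρ)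

/-- Marginal (partial trace) on the first factor. -/
def margA {A B : Type*} [Fintype A] [Fintype B] (ρ : Matrix (A × B) (A × B) ℂ) :
    Matrix A A ℂ :=
  Matrix.of fun a a' => ∑ b : B, ρ (a, b) (a', b)

/-- Marginal (partial trace) on the second factor. -/
def margB {A B : Type*} [Fintype A] [Fintype B] (ρ : Matrix (A × B) (A × B) ℂ) :
    Matrix B B ℂ :=
  Matrix.of fun b b' => ∑ a : A, ρ (a, b) (a, b')

end

/-! With `Q = 1 - Π` and `u = 1 - tr(Πρ)`, the state `ρ' = u⁻¹ QρQ` lives on the range of `Q`, so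
`√ρ' = √ρ' Q = Q √ρ'` and `√ρ' ρ √ρ' = √ρ' (QρQ) √ρ' = u ρ'²`. Hence `‖√ρ √ρ'‖₁ = √u tr ρ'`, and since
`1 - tr ρ' = (1 - tr ρ) / u`, the square root of the generalized fidelity is
`(tr ρ - tr(Πρ)) / √u + (1 - tr ρ) / √u = √u`. So `F̄(ρ, ρ') = 1 - tr(Πρ)`. -/

open scoped MatrixOrder

section

variable {n : Type*} [Fintype n]

lemma rtr_smul (r : ℝ) (A : Matrix n n ℂ) : rtr (r • A) = r * rtr A := by
  simp [rtr, Matrix.trace_smul]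

variable [DecidableEq n]

lemma rtr_one_sub_mul_mul_one_sub {P : Matrix n n ℂ} (hP : IsIdempotentElem P) (ρ : Matrix n n ℂ) :
    rtr ((1 - P) * ρ * (1 - P)) = rtr ρ - rtr (P * ρ) := by
  rw [rtr, Matrix.trace_mul_cycle, hP.one_sub.eq, Matrix.sub_mul, Matrix.one_mul,
    Matrix.trace_sub, Complex.sub_re, rtr, rtr]

lemma psdSqrtOld_eq_cfcSqrt {A : Matrix n n ℂ} (hA : A.PosSemidef) :
    psdSqrtOld hA = CFC.sqrt A := by
  rw [CFC.sqrt_eq_cfc, cfc_nnreal_eq_real _ A, hA.1.cfc_eq]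
  simp only [IsHermitian.cfc, psdSqrtOld, Real.coe_sqrt, Real.coe_toNNReal',
    Unitary.conjStarAlgAut_apply]
  congr 3
  funext i
  simp [max_eq_left (hA.eigenvalues_nonneg i)]

lemma msqrt_eq_cfcSqrt {A : Matrix n n ℂ} (hA : A.PosSemidef) : msqrt A = CFC.sqrt A := by
  rw [msqrt, dif_pos hA, psdSqrtOld_eq_cfcSqrt]

lemma traceNorm_msqrt_mul_msqrt {ρ σ : Matrix n n ℂ} (hρ : ρ.PosSemidef) (hσ : σ.PosSemidef) :
    traceNorm (msqrt ρ * msqrt σ) = rtr (CFC.sqrt (CFC.sqrt σ * ρ * CFC.sqrt σ)) := by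
  rw [traceNorm, psdSqrtOld_eq_cfcSqrt, msqrt_eq_cfcSqrt hρ, msqrt_eq_cfcSqrt hσ,
    Matrix.conjTranspose_mul, ← Matrix.star_eq_conjTranspose, ← Matrix.star_eq_conjTranspose,
    (CFC.sqrt_nonneg ρ).isSelfAdjoint.star_eq, (CFC.sqrt_nonneg σ).isSelfAdjoint.star_eq,
    Matrix.mul_assoc, ← Matrix.mul_assoc (CFC.sqrt ρ), CFC.sqrt_mul_sqrt_self ρ hρ.nonneg,
    ← Matrix.mul_assoc]

lemma IsSelfAdjoint.smul_conjugate_nonneg {Q ρ : Matrix n n ℂ} (hQ : IsSelfAdjoint Q)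
    (hρ : 0 ≤ ρ) {c : ℝ} (hc : 0 ≤ c) : 0 ≤ c • (Q * ρ * Q) :=
  smul_nonneg hc (hQ.conjugate_nonneg hρ)

lemma IsStarProjection.cfcSqrt_mul_eq_self {Q σ : Matrix n n ℂ} (hQ : IsStarProjection Q)
    (hσ : 0 ≤ σ) (h : Q * σ * Q = σ) : CFC.sqrt σ * Q = CFC.sqrt σ := by
  set T := CFC.sqrt σ
  have hT : Tᴴ = T := (CFC.sqrt_nonneg σ).isSelfAdjoint.star_eq
  have hP : (1 - Q)ᴴ = 1 - Q := hQ.one_sub.isSelfAdjoint.star_eq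
  -- `(T (1 - Q))ᴴ (T (1 - Q)) = (1 - Q) σ (1 - Q)`, which vanishes because `σ = QσQ`
  have hTP : T * (1 - Q) = 0 := by
    rw [← Matrix.conjTranspose_mul_self_eq_zero, Matrix.conjTranspose_mul, hT, hP,
      Matrix.mul_assoc, ← Matrix.mul_assoc T, CFC.sqrt_mul_sqrt_self σ hσ, ← h]
    simp only [← Matrix.mul_assoc, hQ.one_sub_mul_self, Matrix.zero_mul]
  rwa [Matrix.mul_sub, Matrix.mul_one, sub_eq_zero, eq_comm] at hTP

lemma cfcSqrt_mul_mul_cfcSqrt_of_compression {Q ρ σ : Matrix n n ℂ} (hQ : IsStarProjection Q)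
    (hρ : 0 ≤ ρ) {u : ℝ} (hu : 0 < u) (hσ : σ = u⁻¹ • (Q * ρ * Q)) :
    CFC.sqrt σ * ρ * CFC.sqrt σ = u • (σ * σ) := by
  have hQρQ : Q * ρ * Q = u • σ := by rw [hσ, smul_smul, mul_inv_cancel₀ hu.ne', one_smul]
  have hσ0 : 0 ≤ σ := hσ ▸ hQ.isSelfAdjoint.smul_conjugate_nonneg hρ (inv_nonneg.2 hu.le)
  set T := CFC.sqrt σ
  have hTQ : T * Q = T := hQ.cfcSqrt_mul_eq_self hσ0 <| by
    rw [hσ, Matrix.mul_smul, Matrix.smul_mul]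
    simp only [← Matrix.mul_assoc, hQ.isIdempotentElem.eq]
    rw [Matrix.mul_assoc _ Q Q, hQ.isIdempotentElem.eq]
  have hQT : Q * T = T := by
    have := congrArg star hTQ
    rwa [star_mul, hQ.isSelfAdjoint.star_eq, (CFC.sqrt_nonneg σ).isSelfAdjoint.star_eq] at this
  have hTT : T * T = σ := CFC.sqrt_mul_sqrt_self σ hσ0
  calc T * ρ * T = (T * Q) * ρ * (Q * T) := by rw [hTQ, hQT]
    _ = u • (T * σ * T) := by
        rw [← Matrix.smul_mul, ← Matrix.mul_smul, ← hQρQ]; simp only [Matrix.mul_assoc]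
    _ = u • (σ * σ) := by
        rw [← hTT]; simp only [Matrix.mul_assoc]

lemma traceNorm_msqrt_mul_msqrt_of_compression {Q ρ σ : Matrix n n ℂ} (hQ : IsStarProjection Q)
    (hρ : ρ.PosSemidef) {u : ℝ} (hu : 0 < u) (hσ : σ = u⁻¹ • (Q * ρ * Q)) :
    traceNorm (msqrt ρ * msqrt σ) = √u * rtr σ := by
  have hσ0 : 0 ≤ σ := hσ ▸ hQ.isSelfAdjoint.smul_conjugate_nonneg hρ.nonneg (inv_nonneg.2 hu.le)
  have hsq : u • (σ * σ) = (√u • σ) ^ 2 := by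
    rw [smul_pow, Real.sq_sqrt hu.le, sq]
  rw [traceNorm_msqrt_mul_msqrt hρ hσ0.posSemidef,
    cfcSqrt_mul_mul_cfcSqrt_of_compression hQ hρ.nonneg hu hσ, hsq,
    CFC.sqrt_sq _ (smul_nonneg (Real.sqrt_nonneg u) hσ0), rtr_smul]

end

lemma sq_sqrt_mul_add_sqrt_mul_eq {s t : ℝ} (hs : s ≤ 1) (ht : t < 1) :
    (√(1 - t) * ((s - t) / (1 - t)) + √((1 - s) * (1 - (s - t) / (1 - t)))) ^ 2 = 1 - t := by
  have hu : 0 < 1 - t := sub_pos.2 ht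
  have hsqrt : √((1 - s) * (1 - (s - t) / (1 - t))) = (1 - s) / √(1 - t) := by
    rw [show (1 - s) * (1 - (s - t) / (1 - t)) = (1 - s) ^ 2 / (1 - t) by field_simp; ring,
      Real.sqrt_div' _ hu.le, Real.sqrt_sq (sub_nonneg.2 hs)]
  rw [hsqrt]
  field_simp
  rw [Real.sq_sqrt hu.le]
  ring

theorem gentle_measurement_purified_distance_general
    {n : Type*} [Fintype n] [DecidableEq n]
    (Pr ρ : Matrix n n ℂ) (hPr : Pr.IsHermitian) (hPr2 : Pr * Pr = Pr)
    (hρ : ρ.PosSemidef) (hρ1 : rtr ρ ≤ 1)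
    (hlt : rtr (Pr * ρ) < 1)
    (ρ' : Matrix n n ℂ) (hρ' : ρ' = (1 - rtr (Pr * ρ))⁻¹ • ((1 - Pr) * ρ * (1 - Pr))) :
    ρ'.PosSemidef ∧ rtr ρ' ≤ 1 ∧
      purDist ρ ρ' = Real.sqrt (rtr (Pr * ρ)) ∧
      (rtr ρ' = 1 ↔ rtr ρ = 1) := by
  have hQ : IsStarProjection (1 - Pr) := IsStarProjection.one_sub ⟨hPr2, hPr⟩
  have hu : 0 < 1 - rtr (Pr * ρ) := sub_pos.2 hlt
  have htr : rtr ρ' = (rtr ρ - rtr (Pr * ρ)) / (1 - rtr (Pr * ρ)) := by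
    rw [hρ', rtr_smul, rtr_one_sub_mul_mul_one_sub hPr2, inv_mul_eq_div]
  have hfid : genFid ρ ρ' = 1 - rtr (Pr * ρ) := by
    rw [genFid, traceNorm_msqrt_mul_msqrt_of_compression hQ hρ hu hρ', htr]
    exact sq_sqrt_mul_add_sqrt_mul_eq hρ1 hlt
  have hρ'0 : 0 ≤ ρ' := hρ' ▸ hQ.isSelfAdjoint.smul_conjugate_nonneg hρ.nonneg (inv_nonneg.2 hu.le)
  refine ⟨hρ'0.posSemidef, ?_, ?_, ?_⟩
  · rw [htr, div_le_one hu]; linarith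
  · rw [purDist, hfid, sub_sub_cancel]
  · rw [htr, div_eq_one_iff_eq hu.ne']
    constructor <;> intro h <;> linarith

/-- Gentle measurement for the purified distance. -/
theorem gentle_measurement_purified_distance
    {n : Type*} [Fintype n] [DecidableEq n] [Nonempty n]
    (Pr ρ : Matrix n n ℂ) (hPr : Pr.IsHermitian) (hPr2 : Pr * Pr = Pr)
    (hρ : ρ.PosSemidef) (hρ0 : 0 < rtr ρ) (hρ1 : rtr ρ ≤ 1)
    (hlt : rtr (Pr * ρ) < 1)
    (ρ' : Matrix n n ℂ) (hρ' : ρ' = (1 - rtr (Pr * ρ))⁻¹ • ((1 - Pr) * ρ * (1 - Pr))) :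
    ρ'.PosSemidef ∧ rtr ρ' ≤ 1 ∧
      purDist ρ ρ' = Real.sqrt (rtr (Pr * ρ)) ∧
      (rtr ρ' = 1 ↔ rtr ρ = 1) :=
  gentle_measurement_purified_distance_general Pr ρ hPr hPr2 hρ hρ1 hlt ρ' hρ'
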